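/- arXiv:1708.06527 — 15 statements merged into one kernel-verified Lean document; each statement's English description precedes it below -/
import Mathlib

section
/- Let u, v be nonzero reals and let a : ℕ → ℝ be any sequence. Define A(n,k) by A(n,0) = a(n) and A(n,k) = u·A(n,k-1) + v·A(n-1,k-1) for 1 ≤ k ≤ n, and let b(n) = A(n,n). Then for all n, a(n) = Σ_{i=0}^{n} C(n,i) (1/u)^i (-v/u)^{n-i} b(i). -/
/-!
Write `E` for the shift `(E c) j = c (j + 1)` on sequences. By the binomial theorem, the
transform `b n = ∑ C(n,i) uⁱ vⁿ⁻ⁱ a i` is `b n = ((u E + v)ⁿ a) 0`, and the recursion defining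
`A n k` is one factor of `u E + v` at a time, so `b` is this transform of `a`. Expanding once
more, transforming with `(u', v')` after `(u, v)` is transforming with `(u' u, u' v + v')`; for
`u' = 1/u`, `v' = -v/u` this is `(1, 0)`, and `(Eⁿ a) 0 = a n`.
-/

open Finset

section

variable {R : Type*} [CommSemiring R]

def binomialTransform (u v : R) (a : ℕ → R) (n : ℕ) : R :=
  ∑ i ∈ range (n + 1), (n.choose i : R) * u ^ i * v ^ (n - i) * a i

theorem smul_add_algebraMap_pow {S : Type*} [Semiring S] [Algebra R S] (u v : R) (X : S) (n : ℕ) :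
    (u • X + algebraMap R S v) ^ n =
      ∑ i ∈ range (n + 1), ((n.choose i : R) * u ^ i * v ^ (n - i)) • X ^ i := by
  rw [(Algebra.commute_algebraMap_right v (u • X)).add_pow]
  refine sum_congr rfl fun i _ => ?_
  rw [← map_pow, ← map_natCast (algebraMap R S), ← Algebra.commutes, ← Algebra.smul_def,
    ← Algebra.commutes, ← Algebra.smul_def, smul_pow, smul_smul, smul_smul, mul_right_comm]

abbrev seqShift : Module.End R (ℕ → R) := LinearMap.funLeft R R Nat.succ

theorem seqShift_pow_apply (c : ℕ → R) (i j : ℕ) : (seqShift ^ i) c j = c (j + i) := by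
  induction i generalizing c with
  | zero => rfl
  | succ i ih => rw [pow_succ, Module.End.mul_apply, ih]; rfl

def interpolatedShift (u v : R) : Module.End R (ℕ → R) :=
  u • seqShift + algebraMap R _ v

theorem binomialTransform_eq_pow_apply (u v : R) (c : ℕ → R) (n : ℕ) :
    binomialTransform u v c n = (interpolatedShift u v ^ n) c 0 := by
  simp [interpolatedShift, smul_add_algebraMap_pow, binomialTransform, seqShift_pow_apply]

theorem binomialTransform_succ (u v : R) (c : ℕ → R) (k : ℕ) :
    binomialTransform u v c (k + 1) =
      u * binomialTransform u v (fun j => c (j + 1)) k + v * binomialTransform u v c k := by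
  simp only [binomialTransform_eq_pow_apply, pow_succ, Module.End.mul_apply, interpolatedShift,
    LinearMap.add_apply, LinearMap.smul_apply, Module.algebraMap_end_apply, map_add, map_smul]
  rfl

theorem interpolatedShift_comp (u v u' v' : R) :
    interpolatedShift (u' * u) (u' * v + v') =
      u' • interpolatedShift u v + algebraMap R _ v' := by
  rw [interpolatedShift, interpolatedShift, map_add, map_mul, ← Algebra.smul_def, smul_add,
    smul_smul, add_assoc]

theorem binomialTransform_binomialTransform (u v u' v' : R) (c : ℕ → R) :
    binomialTransform u' v' (binomialTransform u v c) =
      binomialTransform (u' * u) (u' * v + v') c := by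
  ext n
  rw [binomialTransform_eq_pow_apply (u' * u), interpolatedShift_comp, smul_add_algebraMap_pow,
    binomialTransform]
  simp [binomialTransform_eq_pow_apply]

theorem binomialTransform_one_zero (c : ℕ → R) : binomialTransform 1 0 c = c := by
  ext n
  simp [binomialTransform_eq_pow_apply, interpolatedShift, seqShift_pow_apply]

theorem eq_binomialTransform_of_rec (u v : R) (A : ℕ → ℕ → R)
    (hA : ∀ n k, 1 ≤ k → k ≤ n → A n k = u * A n (k - 1) + v * A (n - 1) (k - 1))
    {n k : ℕ} (hkn : k ≤ n) :
    A n k = binomialTransform u v (fun j => A (n - k + j) 0) k := by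
  induction k generalizing n with
  | zero => simp [binomialTransform]
  | succ k ih =>
    rw [hA n (k + 1) (by omega) hkn, Nat.add_sub_cancel, ih (by omega), ih (by omega),
      binomialTransform_succ]
    congr 3 with j <;> congr 1 <;> omega

end

theorem stmt_1_general (u v : ℝ) (hu : u ≠ 0)
    (a : ℕ → ℝ) (A : ℕ → ℕ → ℝ) (hA0 : ∀ n, A n 0 = a n)
    (hA : ∀ n k, 1 ≤ k → k ≤ n → A n k = u * A n (k-1) + v * A (n-1) (k-1))
    (b : ℕ → ℝ) (hb : ∀ n, b n = A n n) :
    ∀ n, a n = ∑ i ∈ Finset.range (n+1),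
      (n.choose i : ℝ) * (1/u)^i * (-v/u)^(n-i) * b i := by
  have hb' : b = binomialTransform u v a := by
    ext n
    rw [hb, eq_binomialTransform_of_rec u v A hA le_rfl]
    simp only [Nat.sub_self, zero_add, hA0]
  have hinv : binomialTransform (1 / u) (-v / u) b = a := by
    rw [hb', binomialTransform_binomialTransform, one_div_mul_cancel hu, one_div_mul_eq_div,
      ← add_div, add_neg_cancel, zero_div, binomialTransform_one_zero]
  exact fun n => (congrFun hinv n).symm

theorem stmt_1 (u v : ℝ) (hu : u ≠ 0) (hv : v ≠ 0)
    (a : ℕ → ℝ) (A : ℕ → ℕ → ℝ) (hA0 : ∀ n, A n 0 = a n)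
    (hA : ∀ n k, 1 ≤ k → k ≤ n → A n k = u * A n (k-1) + v * A (n-1) (k-1))
    (b : ℕ → ℝ) (hb : ∀ n, b n = A n n) :
    ∀ n, a n = ∑ i ∈ Finset.range (n+1),
      (n.choose i : ℝ) * (1/u)^i * (-v/u)^(n-i) * b i :=
  stmt_1_general u v hu a A hA0 hA b hb
end

section
/- Let u, v, α, β be reals with uvαβ ≠ 0, and let a : ℕ → ℝ satisfy a(n) = α·a(n-1) + β·a(n-2) for n ≥ 2. Define A(n,0) = a(n) and A(n,k) = u·A(n,k-1) + v·A(n-1,k-1) for 1 ≤ k ≤ n. Then for all fixed k and all n ≥ k+2, A(n,k) = α·A(n-1,k) + β·A(n-2,k); that is, each column (diagonal parallel to the left leg) satisfies the same binary recurrence as a. -/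
theorem stmt_3 (u v α β : ℝ) (h : u * v * α * β ≠ 0)
    (a : ℕ → ℝ) (ha : ∀ n, 2 ≤ n → a n = α * a (n-1) + β * a (n-2))
    (A : ℕ → ℕ → ℝ) (hA0 : ∀ n, A n 0 = a n)
    (hA : ∀ n k, 1 ≤ k → k ≤ n → A n k = u * A n (k-1) + v * A (n-1) (k-1)) :
    ∀ k n, k + 2 ≤ n → A n k = α * A (n-1) k + β * A (n-2) k := by
  intro k
  induction k with
  | zero =>
    intro n hn
    simp only [hA0]
    exact ha n (by omega)
  | succ k ih =>
    intro n hn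
    have h1 : A n (k+1) = u * A n k + v * A (n-1) k := by
      simpa using hA n (k+1) (by omega) (by omega)
    have h2 : A (n-1) (k+1) = u * A (n-1) k + v * A (n-1-1) k := by
      simpa using hA (n-1) (k+1) (by omega) (by omega)
    have h3 : A (n-2) (k+1) = u * A (n-2) k + v * A (n-2-1) k := by
      simpa using hA (n-2) (k+1) (by omega) (by omega)
    have e1 : A n k = α * A (n-1) k + β * A (n-2) k := ih n (by omega)
    have e2 : A (n-1) k = α * A (n-1-1) k + β * A (n-1-2) k := ih (n-1) (by omega)
    have hne1 : n - 1 - 1 = n - 2 := by omega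
    have hne2 : n - 1 - 2 = n - 2 - 1 := by omega
    rw [hne1] at h2 e2
    rw [hne2] at e2
    rw [h1, h2, h3, e1, e2]
    ring
end

section
/- With the binary binomial interpolated triangle A(n,k) as above (a(n)=α·a(n-1)+β·a(n-2), A(n,k)=u·A(n,k-1)+v·A(n-1,k-1)), for all 2 ≤ k+1 ≤ n: A(n,k) = (uβ/v)·A(n-1,k) − (𝓑/v)·A(n-1,k-1), where 𝓑 = u²β − uvα − v². -/
theorem stmt_4 (u v α β : ℝ) (hu : u ≠ 0) (hv : v ≠ 0) (hα : α ≠ 0) (hβ : β ≠ 0)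
    (a : ℕ → ℝ) (ha : ∀ n, 2 ≤ n → a n = α * a (n-1) + β * a (n-2))
    (A : ℕ → ℕ → ℝ) (hA0 : ∀ n, A n 0 = a n)
    (hA : ∀ n k, 1 ≤ k → k ≤ n → A n k = u * A n (k-1) + v * A (n-1) (k-1)) :
    ∀ n k, 1 ≤ k → k + 1 ≤ n →
      A n k = (u * β / v) * A (n-1) k - ((u^2*β - u*v*α - v^2) / v) * A (n-1) (k-1) := by
  intro n k hk hkn
  induction k generalizing n with
  | zero => omega
  | succ k ih =>
    rcases Nat.eq_zero_or_pos k with rfl | hk1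
    · -- base case k+1 = 1
      have hn : 2 ≤ n := hkn
      have e1 := hA n 1 le_rfl (by omega)
      have e2 := hA (n-1) 1 le_rfl (by omega)
      have e3 := ha n hn
      simp only [Nat.sub_self, hA0] at e1 e2 ⊢
      have h21 : n - 1 - 1 = n - 2 := by omega
      rw [h21] at e2
      rw [e1, e2, e3]
      field_simp
      ring
    · have e1 := hA n (k+1) (by omega) (by omega)
      have e2 := ih n hk1 (by omega)
      have e3 := ih (n-1) hk1 (by omega)
      have e4 := hA (n-1) (k+1) (by omega) (by omega)
      have e5 := hA (n-1) k hk1 (by omega)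
      have h21 : n - 1 - 1 = n - 2 := by omega
      simp only [Nat.add_sub_cancel, h21] at e1 e2 e3 e4 e5 ⊢
      linear_combination e1 + u*e2 + v*e3 - (u*β/v)*e4 + ((u^2*β-u*v*α-v^2)/v)*e5
end

section
/- With the binary binomial interpolated triangle A(n,k) as above, for all 2 ≤ k+1 ≤ n: A(n,k) = (uα+v)·A(n-1,k-1) + uβ·A(n-2,k-1). -/
theorem stmt_5 (u v α β : ℝ) (hu : u ≠ 0) (hv : v ≠ 0) (hα : α ≠ 0) (hβ : β ≠ 0)
    (a : ℕ → ℝ) (ha : ∀ n, 2 ≤ n → a n = α * a (n-1) + β * a (n-2))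
    (A : ℕ → ℕ → ℝ) (hA0 : ∀ n, A n 0 = a n)
    (hA : ∀ n k, 1 ≤ k → k ≤ n → A n k = u * A n (k-1) + v * A (n-1) (k-1)) :
    ∀ n k, 1 ≤ k → k + 1 ≤ n →
      A n k = (u*α + v) * A (n-1) (k-1) + u*β * A (n-2) (k-1) := by
  intro n k
  induction k generalizing n with
  | zero => intro h; omega
  | succ k ih =>
    intro _ hn
    rcases Nat.eq_zero_or_pos k with hk0 | hk1
    · subst hk0
      have h2 : 2 ≤ n := by omega
      rw [hA n 1 le_rfl (by omega)]
      simp only [Nat.sub_self, hA0]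
      rw [ha n h2]
      ring
    · -- k+1 ≥ 2
      have hrec := hA n (k+1) (by omega) (by omega)
      have h1 := ih n hk1 (by omega)
      have h2 := ih (n-1) hk1 (by omega)
      have e1 : n - 1 - 1 = n - 2 := by omega
      have e2 : n - 1 - 2 = n - 3 := by omega
      have e3 : n - 2 - 1 = n - 3 := by omega
      rw [e1, e2] at h2
      have hb1 := hA (n-1) k hk1 (by omega)
      have hb2 := hA (n-2) k hk1 (by omega)
      rw [e1] at hb1
      rw [e3] at hb2
      simp only [Nat.add_sub_cancel] at *
      linear_combination hrec + u*h1 + v*h2 - (u*α+v)*hb1 - u*β*hb2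
end

section
/- With the binary binomial interpolated triangle A(n,k) as above, for all 2 ≤ k ≤ n: A(n,k) = 𝓐·A(n-1,k-1) + 𝓑·A(n-2,k-2), where 𝓐 = uα + 2v and 𝓑 = u²β − uvα − v². In particular the right diagonal b(n)=A(n,n) satisfies b(n) = 𝓐·b(n-1) + 𝓑·b(n-2) for n ≥ 2. -/
theorem stmt_6 (u v α β : ℝ) (hu : u ≠ 0) (hv : v ≠ 0) (hα : α ≠ 0) (hβ : β ≠ 0)
    (a : ℕ → ℝ) (ha : ∀ n, 2 ≤ n → a n = α * a (n-1) + β * a (n-2))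
    (A : ℕ → ℕ → ℝ) (hA0 : ∀ n, A n 0 = a n)
    (hA : ∀ n k, 1 ≤ k → k ≤ n → A n k = u * A n (k-1) + v * A (n-1) (k-1)) :
    (∀ n k, 2 ≤ k → k ≤ n →
      A n k = (u*α + 2*v) * A (n-1) (k-1) + (u^2*β - u*v*α - v^2) * A (n-2) (k-2)) ∧
    (∀ n, 2 ≤ n →
      A n n = (u*α + 2*v) * A (n-1) (n-1) + (u^2*β - u*v*α - v^2) * A (n-2) (n-2)) := by
  have hcol : ∀ k n, k + 2 ≤ n → A n k = α * A (n-1) k + β * A (n-2) k := by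
    intro k
    induction k with
    | zero =>
      intro n hn
      rw [hA0, hA0, hA0]
      exact ha n (by omega)
    | succ k ih =>
      intro n hn
      have h1 : A n (k+1) = u * A n k + v * A (n-1) k := by
        simpa using hA n (k+1) (by omega) (by omega)
      have h2 : A (n-1) (k+1) = u * A (n-1) k + v * A (n-2) k := by
        have := hA (n-1) (k+1) (by omega) (by omega)
        simpa [show n-1-1 = n-2 from by omega] using this
      have h3 : A (n-2) (k+1) = u * A (n-2) k + v * A (n-3) k := by
        have := hA (n-2) (k+1) (by omega) (by omega)
        simpa [show n-2-1 = n-3 from by omega] using this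
      have e1 : A n k = α * A (n-1) k + β * A (n-2) k := ih n (by omega)
      have e2 : A (n-1) k = α * A (n-2) k + β * A (n-3) k := by
        have := ih (n-1) (by omega)
        simpa [show n-1-1 = n-2 from by omega, show n-1-2 = n-3 from by omega] using this
      rw [h1, h2, h3, e1, e2]; ring
  have main : ∀ n k, 2 ≤ k → k ≤ n →
      A n k = (u*α + 2*v) * A (n-1) (k-1) + (u^2*β - u*v*α - v^2) * A (n-2) (k-2) := by
    intro n k hk hkn
    have h1 : A n k = u * A n (k-1) + v * A (n-1) (k-1) :=
      hA n k (by omega) (by omega)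
    have h2 : A n (k-1) = u * A n (k-2) + v * A (n-1) (k-2) := by
      have := hA n (k-1) (by omega) (by omega)
      simpa [show k-1-1 = k-2 from by omega] using this
    have h3 : A (n-1) (k-1) = u * A (n-1) (k-2) + v * A (n-2) (k-2) := by
      have := hA (n-1) (k-1) (by omega) (by omega)
      simpa [show k-1-1 = k-2 from by omega, show n-1-1 = n-2 from by omega] using this
    have h4 : A n (k-2) = α * A (n-1) (k-2) + β * A (n-2) (k-2) :=
      hcol (k-2) n (by omega)
    linear_combination h1 + u*h2 + u^2*h4 - (u*α+v)*h3
  refine ⟨main, fun n hn => main n n hn le_rfl⟩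
end

section
/- With the binary binomial interpolated triangle A(n,k) as above, for all 2 ≤ k ≤ n: A(n,k) = ((2uβ−vα)/β)·A(n,k-1) − (𝓑/β)·A(n,k-2), where 𝓑 = u²β − uvα − v²; that is, each row satisfies a binary recurrence in k. -/
theorem stmt_7 (u v α β : ℝ) (hu : u ≠ 0) (hv : v ≠ 0) (hα : α ≠ 0) (hβ : β ≠ 0)
    (a : ℕ → ℝ) (ha : ∀ n, 2 ≤ n → a n = α * a (n-1) + β * a (n-2))
    (A : ℕ → ℕ → ℝ) (hA0 : ∀ n, A n 0 = a n)
    (hA : ∀ n k, 1 ≤ k → k ≤ n → A n k = u * A n (k-1) + v * A (n-1) (k-1)) :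
    ∀ n k, 2 ≤ k → k ≤ n →
      A n k = ((2*u*β - v*α) / β) * A n (k-1)
        - ((u^2*β - u*v*α - v^2) / β) * A n (k-2) := by
  have col : ∀ k n, k + 2 ≤ n → A n k = α * A (n-1) k + β * A (n-2) k := by
    intro k
    induction k with
    | zero =>
      intro n hn
      rw [hA0, hA0, hA0]
      exact ha n (by omega)
    | succ j ih =>
      intro n hn
      have e1 : A n (j+1) = u * A n j + v * A (n-1) j := hA n (j+1) (by omega) (by omega)
      have e2 : A (n-1) (j+1) = u * A (n-1) j + v * A (n-2) j := hA (n-1) (j+1) (by omega) (by omega)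
      have e3 : A (n-2) (j+1) = u * A (n-2) j + v * A (n-3) j := hA (n-2) (j+1) (by omega) (by omega)
      have i1 : A n j = α * A (n-1) j + β * A (n-2) j := ih n (by omega)
      have i2 : A (n-1) j = α * A (n-2) j + β * A (n-3) j := ih (n-1) (by omega)
      linear_combination e1 + u*i1 + v*i2 - α*e2 - β*e3
  intro n k hk hkn
  obtain ⟨j, rfl⟩ : ∃ j, k = j + 2 := ⟨k - 2, by omega⟩
  simp only [show j+2-1 = j+1 from rfl, show j+2-2 = j from rfl]
  have e1 : A n (j+2) = u * A n (j+1) + v * A (n-1) (j+1) := hA n (j+2) (by omega) (by omega)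
  have e2 : A (n-1) (j+1) = u * A (n-1) j + v * A (n-2) j := hA (n-1) (j+1) (by omega) (by omega)
  have e3 : A n (j+1) = u * A n j + v * A (n-1) j := hA n (j+1) (by omega) (by omega)
  have e4 : A n j = α * A (n-1) j + β * A (n-2) j := col j n (by omega)
  have key : β * A n (j+2) = (2*u*β - v*α) * A n (j+1) - (u^2*β - u*v*α - v^2) * A n j := by
    linear_combination β*e1 + v*β*e2 + (v*α - u*β)*e3 - v^2*e4
  field_simp
  linear_combination key
end

section
/- Define s(n) = Σ_{k=0}^{n} A(n,k), the sum of row n of the binary binomial interpolated triangle. Then for all n ≥ 4: s(n) = (α+𝓐)s(n-1) + (β − α𝓐 + 𝓑)s(n-2) − (α𝓑 + β𝓐)s(n-3) − β𝓑·s(n-4), where 𝓐 = uα+2v and 𝓑 = u²β−uvα−v². -/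
/-!
Every column of the triangle satisfies the recurrence `x² = αx + β` of `a`, so the row sums do
too, up to the two boundary entries `A(n,n)` and `A(n+1,n)` that each row adds. These boundary
entries evolve by the linear map `(d, e) ↦ (v d + u e, uβ d + (uα + v) e)`, whose trace is `𝓐`
and whose determinant is `-𝓑`; by Cayley–Hamilton they satisfy `x² = 𝓐x + 𝓑`. Hence the row sums
satisfy the recurrence with characteristic polynomial `(x² - αx - β)(x² - 𝓐x - 𝓑)`.
-/

section

variable {R : Type*} [CommRing R]

theorem two_step_rec_of_coupled {x y : ℕ → R} {p q r w : R}
    (hx : ∀ n, x (n + 1) = p * x n + q * y n) (hy : ∀ n, y (n + 1) = r * x n + w * y n)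
    (n : ℕ) : x (n + 2) = (p + w) * x (n + 1) + (q * r - p * w) * x n := by
  linear_combination hx (n + 1) + q * hy n - w * hx n

def rowSum (A : ℕ → ℕ → R) (n : ℕ) : R := ∑ k ∈ Finset.range (n + 1), A n k

variable {A : ℕ → ℕ → R} {u v α β : R}

theorem column_rec (hA : ∀ n k, k ≤ n → A (n + 1) (k + 1) = u * A (n + 1) k + v * A n k)
    (h0 : ∀ n, A (n + 2) 0 = α * A (n + 1) 0 + β * A n 0) :
    ∀ n k, k ≤ n → A (n + 2) k = α * A (n + 1) k + β * A n k := by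
  intro n k
  induction k generalizing n with
  | zero => exact fun _ => h0 n
  | succ k ih =>
    intro hkn
    obtain ⟨n, rfl⟩ : ∃ m, n = m + 1 := ⟨n - 1, by omega⟩
    linear_combination hA (n + 2) k (by omega) - α * hA (n + 1) k (by omega)
      - β * hA n k (by omega) + u * ih (n + 1) (by omega) + v * ih n (by omega)

theorem rowSum_sub_eq (hcol : ∀ n k, k ≤ n → A (n + 2) k = α * A (n + 1) k + β * A n k)
    (n : ℕ) :
    rowSum A (n + 2) - α * rowSum A (n + 1) - β * rowSum A n
      = A (n + 2) (n + 2) + A (n + 2) (n + 1) - α * A (n + 1) (n + 1) := by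
  have hbulk : ∑ k ∈ Finset.range (n + 1), A (n + 2) k
      = α * ∑ k ∈ Finset.range (n + 1), A (n + 1) k + β * ∑ k ∈ Finset.range (n + 1), A n k := by
    rw [Finset.mul_sum, Finset.mul_sum, ← Finset.sum_add_distrib]
    exact Finset.sum_congr rfl fun k hk => hcol n k (Finset.mem_range_succ_iff.mp hk)
  simp only [rowSum, Finset.sum_range_succ _ (n + 2), Finset.sum_range_succ _ (n + 1), hbulk]
  ring

theorem diag_succ (hA : ∀ n k, k ≤ n → A (n + 1) (k + 1) = u * A (n + 1) k + v * A n k)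
    (n : ℕ) : A (n + 1) (n + 1) = v * A n n + u * A (n + 1) n := by
  linear_combination hA n n le_rfl

theorem subdiag_succ (hA : ∀ n k, k ≤ n → A (n + 1) (k + 1) = u * A (n + 1) k + v * A n k)
    (hcol : ∀ n k, k ≤ n → A (n + 2) k = α * A (n + 1) k + β * A n k) (n : ℕ) :
    A (n + 2) (n + 1) = u * β * A n n + (u * α + v) * A (n + 1) n := by
  linear_combination hA (n + 1) n (by omega) + u * hcol n n le_rfl

theorem diag_rec (hA : ∀ n k, k ≤ n → A (n + 1) (k + 1) = u * A (n + 1) k + v * A n k)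
    (hcol : ∀ n k, k ≤ n → A (n + 2) k = α * A (n + 1) k + β * A n k) (n : ℕ) :
    A (n + 2) (n + 2)
      = (u * α + 2 * v) * A (n + 1) (n + 1) + (u ^ 2 * β - u * v * α - v ^ 2) * A n n := by
  linear_combination two_step_rec_of_coupled (x := fun n => A n n)
    (y := fun n => A (n + 1) n) (diag_succ hA) (subdiag_succ hA hcol) n

theorem subdiag_rec (hA : ∀ n k, k ≤ n → A (n + 1) (k + 1) = u * A (n + 1) k + v * A n k)
    (hcol : ∀ n k, k ≤ n → A (n + 2) k = α * A (n + 1) k + β * A n k) (n : ℕ) :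
    A (n + 3) (n + 2)
      = (u * α + 2 * v) * A (n + 2) (n + 1) + (u ^ 2 * β - u * v * α - v ^ 2) * A (n + 1) n := by
  linear_combination (norm := ring_nf) two_step_rec_of_coupled (x := fun n => A (n + 1) n)
    (y := fun n => A n n) (p := u * α + v) (q := u * β) (r := u) (w := v)
    (fun n => (subdiag_succ hA hcol n).trans (by ring)) (fun n => (diag_succ hA n).trans (by ring)) n

end

theorem stmt_8_general (u v α β : ℝ)
    (a : ℕ → ℝ) (ha : ∀ n, 2 ≤ n → a n = α * a (n-1) + β * a (n-2))
    (A : ℕ → ℕ → ℝ) (hA0 : ∀ n, A n 0 = a n)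
    (hA : ∀ n k, 1 ≤ k → k ≤ n → A n k = u * A n (k-1) + v * A (n-1) (k-1))
    (s : ℕ → ℝ) (hs : ∀ n, s n = ∑ k ∈ Finset.range (n+1), A n k) :
    ∀ n, 4 ≤ n →
      s n = (α + (u*α + 2*v)) * s (n-1)
        + (β - α*(u*α + 2*v) + (u^2*β - u*v*α - v^2)) * s (n-2)
        - (α*(u^2*β - u*v*α - v^2) + β*(u*α + 2*v)) * s (n-3)
        - β*(u^2*β - u*v*α - v^2) * s (n-4) := by
  have hA' : ∀ n k, k ≤ n → A (n + 1) (k + 1) = u * A (n + 1) k + v * A n k :=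
    fun n k hkn => hA (n + 1) (k + 1) (by omega) (by omega)
  have h0 : ∀ n, A (n + 2) 0 = α * A (n + 1) 0 + β * A n 0 := fun n => by
    simpa [hA0] using ha (n + 2) (by omega)
  have hcol := column_rec hA' h0
  obtain rfl : s = rowSum A := funext hs
  intro n hn
  obtain ⟨m, rfl⟩ : ∃ m, n = m + 4 := ⟨n - 4, by omega⟩
  simp only [show m + 4 - 1 = m + 3 from rfl, show m + 4 - 2 = m + 2 from rfl,
    show m + 4 - 3 = m + 1 from rfl, show m + 4 - 4 = m from rfl]
  have hs4 : rowSum A (m + 4) - α * rowSum A (m + 3) - β * rowSum A (m + 2)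
      = A (m + 4) (m + 4) + A (m + 4) (m + 3) - α * A (m + 3) (m + 3) := rowSum_sub_eq hcol _
  have hs3 : rowSum A (m + 3) - α * rowSum A (m + 2) - β * rowSum A (m + 1)
      = A (m + 3) (m + 3) + A (m + 3) (m + 2) - α * A (m + 2) (m + 2) := rowSum_sub_eq hcol _
  have hs2 := rowSum_sub_eq hcol m
  have hd4 : A (m + 4) (m + 4) = _ := diag_rec hA' hcol (m + 2)
  have hd3 : A (m + 3) (m + 3) = _ := diag_rec hA' hcol (m + 1)
  have he4 : A (m + 4) (m + 3) = _ := subdiag_rec hA' hcol (m + 1)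
  linear_combination hs4 - (u * α + 2 * v) * hs3 - (u ^ 2 * β - u * v * α - v ^ 2) * hs2
    + hd4 + he4 - α * hd3

theorem stmt_8 (u v α β : ℝ) (hu : u ≠ 0) (hv : v ≠ 0) (hα : α ≠ 0) (hβ : β ≠ 0)
    (a : ℕ → ℝ) (ha : ∀ n, 2 ≤ n → a n = α * a (n-1) + β * a (n-2))
    (A : ℕ → ℕ → ℝ) (hA0 : ∀ n, A n 0 = a n)
    (hA : ∀ n k, 1 ≤ k → k ≤ n → A n k = u * A n (k-1) + v * A (n-1) (k-1))
    (s : ℕ → ℝ) (hs : ∀ n, s n = ∑ k ∈ Finset.range (n+1), A n k) :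
    ∀ n, 4 ≤ n →
      s n = (α + (u*α + 2*v)) * s (n-1)
        + (β - α*(u*α + 2*v) + (u^2*β - u*v*α - v^2)) * s (n-2)
        - (α*(u^2*β - u*v*α - v^2) + β*(u*α + 2*v)) * s (n-3)
        - β*(u^2*β - u*v*α - v^2) * s (n-4) :=
  stmt_8_general u v α β a ha A hA0 hA s hs
end

section
/- Take the binary binomial interpolated triangle with u = −1 and v = α (and α, β nonzero, a(n) = α·a(n-1) + β·a(n-2)), and define the row-sum sequence s(n) = Σ_{k=0}^{n} A(n,k). Then for all n ≥ 2, s(n) = α·s(n-1) + β·s(n-2). -/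
/-!
Every column of the triangle satisfies the recurrence of `a`: column `0` is `a` itself, and
column `k + 1` is a fixed linear combination of columns `k` and `k` shifted by one row, both of
which satisfy it by induction. Summing row `n + 2` over its first `n + 1` entries therefore gives
`α s(n+1) + β s(n)` up to the last entry of row `n + 1`, and with `u = -1` the two remaining
entries of row `n + 2` add up to exactly `α` times that missing entry.
-/

open Finset

section InterpolatedTriangle

variable {R : Type*} [CommRing R] {α β u v : R} {A : ℕ → ℕ → R}

theorem column_recurrence (hcol : ∀ n, A (n + 2) 0 = α * A (n + 1) 0 + β * A n 0)
    (hA : ∀ n k, k ≤ n → A (n + 1) (k + 1) = u * A (n + 1) k + v * A n k) :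
    ∀ k n, k ≤ n → A (n + 2) k = α * A (n + 1) k + β * A n k := by
  intro k
  induction k with
  | zero => exact fun n _ => hcol n
  | succ k ih =>
    rintro (_ | p) hk
    · omega
    have h₃ := hA (p + 2) k (by omega)
    have h₂ := hA (p + 1) k (by omega)
    have h₁ := hA p k (by omega)
    have i₁ := ih (p + 1) (by omega)
    have i₀ := ih p (by omega)
    linear_combination h₃ - α * h₂ - β * h₁ + u * i₁ + v * i₀

theorem row_sum_recurrence (hcol : ∀ n, A (n + 2) 0 = α * A (n + 1) 0 + β * A n 0)
    (hA : ∀ n k, k ≤ n → A (n + 1) (k + 1) = -A (n + 1) k + α * A n k) (n : ℕ) :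
    ∑ k ∈ range (n + 3), A (n + 2) k
      = α * ∑ k ∈ range (n + 2), A (n + 1) k + β * ∑ k ∈ range (n + 1), A n k := by
  have hcols : ∑ k ∈ range (n + 1), A (n + 2) k
      = α * ∑ k ∈ range (n + 1), A (n + 1) k + β * ∑ k ∈ range (n + 1), A n k := by
    rw [mul_sum, mul_sum, ← sum_add_distrib]
    have hA' : ∀ m j, j ≤ m → A (m + 1) (j + 1) = -1 * A (m + 1) j + α * A m j := by
      simpa only [neg_one_mul] using hA
    exact sum_congr rfl fun k hk =>
      column_recurrence hcol hA' k n (Nat.lt_succ_iff.mp (mem_range.mp hk))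
  have hdiag := hA (n + 1) (n + 1) le_rfl
  rw [sum_range_succ _ (n + 2), sum_range_succ _ (n + 1), sum_range_succ _ (n + 1), hcols,
    hdiag]
  ring

end InterpolatedTriangle

theorem stmt_10_general (α β : ℝ)
    (a : ℕ → ℝ) (ha : ∀ n, 2 ≤ n → a n = α * a (n-1) + β * a (n-2))
    (A : ℕ → ℕ → ℝ) (hA0 : ∀ n, A n 0 = a n)
    (hA : ∀ n k, 1 ≤ k → k ≤ n → A n k = (-1) * A n (k-1) + α * A (n-1) (k-1))
    (s : ℕ → ℝ) (hs : ∀ n, s n = ∑ k ∈ Finset.range (n+1), A n k) :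
    ∀ n, 2 ≤ n → s n = α * s (n-1) + β * s (n-2) := by
  have hcol : ∀ n, A (n + 2) 0 = α * A (n + 1) 0 + β * A n 0 := fun n => by
    simpa [hA0] using ha (n + 2) (by omega)
  have hA' : ∀ n k, k ≤ n → A (n + 1) (k + 1) = -A (n + 1) k + α * A n k := fun n k hk => by
    simpa using hA (n + 1) (k + 1) (by omega) (by omega)
  rintro n hn
  obtain ⟨m, rfl⟩ : ∃ m, n = m + 2 := ⟨n - 2, by omega⟩
  simpa [hs] using row_sum_recurrence hcol hA' m

theorem stmt_10 (α β : ℝ) (hα : α ≠ 0) (hβ : β ≠ 0)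
    (a : ℕ → ℝ) (ha : ∀ n, 2 ≤ n → a n = α * a (n-1) + β * a (n-2))
    (A : ℕ → ℕ → ℝ) (hA0 : ∀ n, A n 0 = a n)
    (hA : ∀ n k, 1 ≤ k → k ≤ n → A n k = (-1) * A n (k-1) + α * A (n-1) (k-1))
    (s : ℕ → ℝ) (hs : ∀ n, s n = ∑ k ∈ Finset.range (n+1), A n k) :
    ∀ n, 2 ≤ n → s n = α * s (n-1) + β * s (n-2) :=
  stmt_10_general α β a ha A hA0 hA s hs
end

section
/- Take the binary binomial interpolated triangle with u = −1 and v = α, and define the alternating row-sum sequence s̄(n) = Σ_{k=0}^{n} (−1)^k A(n,k). Then for all n ≥ 4: s̄(n) = (α² + 2β)·s̄(n-2) − β²·s̄(n-4). -/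
/-!
Shifting the triangle two rows down and one column to the right multiplies it by `-β`, which
gives `s̄(n+2) = β s̄(n) + a(n+2) + (-1)ⁿ A(n+2,n+2)` and shows that the diagonal `A(n,n)` obeys
the recurrence of `a`. Telescoping the defining recurrence of the triangle along a row gives
`α s̄(n) = a(n+1) + (-1)ⁿ A(n+1,n+1)`. Eliminating `a` and the diagonal between these identities
yields the four-term recurrence; its characteristic polynomial `x⁴ - (α² + 2β) x² + β²` is
`(x² - α x - β)(x² + α x - β)`.
-/

open Finset

section InterpolatedTriangle

variable {R : Type*} [CommRing R] {α β : R} {a : ℕ → R} {A : ℕ → ℕ → R}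

def altRowSum (A : ℕ → ℕ → R) (n : ℕ) : R :=
  ∑ k ∈ range (n + 1), (-1) ^ k * A n k

theorem triangle_add_two_succ (ha : ∀ n, a (n + 2) = α * a (n + 1) + β * a n)
    (hA0 : ∀ n, A n 0 = a n)
    (hA : ∀ n k, k ≤ n → A (n + 1) (k + 1) = -A (n + 1) k + α * A n k) :
    ∀ j m, j ≤ m → A (m + 2) (j + 1) = -β * A m j := by
  intro j
  induction j with
  | zero =>
    intro m _
    rw [hA (m + 1) 0 (by omega), hA0, hA0, hA0, ha]
    ring
  | succ j ih =>
    intro m hjm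
    obtain ⟨m, rfl⟩ : ∃ m', m = m' + 1 := ⟨m - 1, by omega⟩
    rw [hA (m + 2) (j + 1) (by omega), hA m j (by omega), ih (m + 1) (by omega), ih m (by omega)]
    ring

theorem triangle_diag_add_two (ha : ∀ n, a (n + 2) = α * a (n + 1) + β * a n)
    (hA0 : ∀ n, A n 0 = a n)
    (hA : ∀ n k, k ≤ n → A (n + 1) (k + 1) = -A (n + 1) k + α * A n k) (n : ℕ) :
    A (n + 2) (n + 2) = α * A (n + 1) (n + 1) + β * A n n := by
  rw [hA (n + 1) (n + 1) le_rfl, triangle_add_two_succ ha hA0 hA n n le_rfl]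
  ring

theorem mul_altRowSum (hA0 : ∀ n, A n 0 = a n)
    (hA : ∀ n k, k ≤ n → A (n + 1) (k + 1) = -A (n + 1) k + α * A n k) (n : ℕ) :
    α * altRowSum A n = a (n + 1) - (-1) ^ (n + 1) * A (n + 1) (n + 1) := by
  have htel := sum_range_sub (fun k ↦ (-1) ^ k * A (n + 1) k) (n + 1)
  have hterm : ∀ k ∈ range (n + 1), (-1) ^ (k + 1) * A (n + 1) (k + 1) - (-1) ^ k * A (n + 1) k
      = -α * ((-1) ^ k * A n k) := by
    intro k hk
    rw [hA n k (Nat.lt_succ_iff.mp (mem_range.mp hk)), pow_succ]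
    ring
  rw [sum_congr rfl hterm, ← mul_sum, hA0] at htel
  rw [altRowSum]
  linear_combination -htel

theorem altRowSum_add_two (ha : ∀ n, a (n + 2) = α * a (n + 1) + β * a n)
    (hA0 : ∀ n, A n 0 = a n)
    (hA : ∀ n k, k ≤ n → A (n + 1) (k + 1) = -A (n + 1) k + α * A n k) (n : ℕ) :
    altRowSum A (n + 2) = β * altRowSum A n + a (n + 2) + (-1) ^ n * A (n + 2) (n + 2) := by
  have hshift : ∀ k ∈ range (n + 1), (-1) ^ (k + 1) * A (n + 2) (k + 1) = β * ((-1) ^ k * A n k) :=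
    fun k hk ↦ by
      rw [triangle_add_two_succ ha hA0 hA k n (Nat.lt_succ_iff.mp (mem_range.mp hk)), pow_succ]
      ring
  rw [altRowSum, sum_range_succ', sum_range_succ, sum_congr rfl hshift, ← mul_sum, hA0, altRowSum]
  ring

end InterpolatedTriangle

theorem stmt_11_general (α β : ℝ)
    (a : ℕ → ℝ) (ha : ∀ n, 2 ≤ n → a n = α * a (n-1) + β * a (n-2))
    (A : ℕ → ℕ → ℝ) (hA0 : ∀ n, A n 0 = a n)
    (hA : ∀ n k, 1 ≤ k → k ≤ n → A n k = (-1) * A n (k-1) + α * A (n-1) (k-1))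
    (sb : ℕ → ℝ) (hsb : ∀ n, sb n = ∑ k ∈ Finset.range (n+1), (-1:ℝ)^k * A n k) :
    ∀ n, 4 ≤ n → sb n = (α^2 + 2*β) * sb (n-2) - β^2 * sb (n-4) := by
  have ha' : ∀ n, a (n + 2) = α * a (n + 1) + β * a n := fun n ↦ ha (n + 2) (by omega)
  have hA' : ∀ n k, k ≤ n → A (n + 1) (k + 1) = -A (n + 1) k + α * A n k := fun n k hkn ↦ by
    simpa using hA (n + 1) (k + 1) (by omega) (by omega)
  obtain rfl : sb = altRowSum A := funext hsb
  intro N hN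
  obtain ⟨n, rfl⟩ : ∃ n, N = n + 4 := ⟨N - 4, by omega⟩
  have hrow₄ := altRowSum_add_two ha' hA0 hA' (n + 2)
  have hrow₂ := altRowSum_add_two ha' hA0 hA' n
  have htel := mul_altRowSum hA0 hA' (n + 2)
  have hdiag := triangle_diag_add_two ha' hA0 hA' (n + 2)
  show altRowSum A (n + 4) = (α ^ 2 + 2 * β) * altRowSum A (n + 2) - β ^ 2 * altRowSum A n
  linear_combination hrow₄ - β * hrow₂ - α * htel + ha' (n + 2) + (-1) ^ n * hdiag

theorem stmt_11 (α β : ℝ) (hα : α ≠ 0) (hβ : β ≠ 0)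
    (a : ℕ → ℝ) (ha : ∀ n, 2 ≤ n → a n = α * a (n-1) + β * a (n-2))
    (A : ℕ → ℕ → ℝ) (hA0 : ∀ n, A n 0 = a n)
    (hA : ∀ n k, 1 ≤ k → k ≤ n → A n k = (-1) * A n (k-1) + α * A (n-1) (k-1))
    (sb : ℕ → ℝ) (hsb : ∀ n, sb n = ∑ k ∈ Finset.range (n+1), (-1:ℝ)^k * A n k) :
    ∀ n, 4 ≤ n → sb n = (α^2 + 2*β) * sb (n-2) - β^2 * sb (n-4) :=
  stmt_11_general α β a ha A hA0 hA sb hsb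
end

section
/- Define the rising diagonal sums d(n) = Σ_{k=0}^{⌊n/2⌋} A(n−k,k) of the binary binomial interpolated triangle, and set D(n) = −d(n) + α·d(n-1) + β·d(n-2) for n ≥ 2. Then for all n ≥ 6: D(n) = 𝓐·D(n-2) + 𝓑·D(n-4), where 𝓐 = uα+2v and 𝓑 = u²β−uvα−v². Moreover, for even n = 2k with k ≥ 1, D(2k) = −A(k,k). -/
/-!
Every column `n ↦ A n k` satisfies the recurrence of `a` from `n = k + 2` on, by induction
on `k` using the defining rule of the triangle. Hence in `D n` all terms of the three diagonal sums
cancel except the last one or two, and `D (2m) = -A m m`, `D (2m+1) = -A (m+1) m + α A m m`.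
Eliminating the subdiagonal from the two triangle rules that link the diagonal `A m m` and
the subdiagonal `A (m+1) m` shows that both satisfy `x (m+2) = 𝓐 x (m+1) + 𝓑 x m`, and
therefore so do both parity classes of `D`.
-/

namespace BinomialInterpolated

variable {u v α β : ℝ} {a : ℕ → ℝ} {A : ℕ → ℕ → ℝ}

theorem apply_succ_succ
    (hA : ∀ n k, 1 ≤ k → k ≤ n → A n k = u * A n (k-1) + v * A (n-1) (k-1)) {n k : ℕ}
    (hk : k ≤ n) : A (n + 1) (k + 1) = u * A (n + 1) k + v * A n k := by
  simpa using hA (n + 1) (k + 1) (by omega) (by omega)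

variable (ha : ∀ n, 2 ≤ n → a n = α * a (n-1) + β * a (n-2)) (hA0 : ∀ n, A n 0 = a n)
  (hA : ∀ n k, 1 ≤ k → k ≤ n → A n k = u * A n (k-1) + v * A (n-1) (k-1))
include ha hA0 hA

theorem column_rec (k n : ℕ) : A (n + k + 2) k = α * A (n + k + 1) k + β * A (n + k) k := by
  induction k generalizing n with
  | zero => simpa [hA0] using ha (n + 2) (by omega)
  | succ k ih =>
    have top := ih (n + 1)
    have bottom := ih n
    rw [show n + 1 + k + 2 = n + k + 3 by omega, show n + 1 + k + 1 = n + k + 2 by omega,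
      show n + 1 + k = n + k + 1 by omega] at top
    rw [show n + (k + 1) + 2 = n + k + 2 + 1 by omega,
      show n + (k + 1) + 1 = n + k + 1 + 1 by omega, show n + (k + 1) = n + k + 1 by omega,
      apply_succ_succ hA (by omega), apply_succ_succ hA (by omega), apply_succ_succ hA (by omega)]
    linear_combination u * top + v * bottom

theorem sum_range_column_rec {m n : ℕ} (hmn : 2 * m ≤ n) :
    ∑ k ∈ Finset.range m, A (n - k) k =
      α * ∑ k ∈ Finset.range m, A (n - 1 - k) k +
        β * ∑ k ∈ Finset.range m, A (n - 2 - k) k := by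
  rw [Finset.mul_sum, Finset.mul_sum, ← Finset.sum_add_distrib]
  refine Finset.sum_congr rfl fun k hk => ?_
  have hkm := Finset.mem_range.1 hk
  obtain ⟨j, hj⟩ : ∃ j, n = j + k + 2 + k := ⟨n - 2 * k - 2, by omega⟩
  rw [hj, show j + k + 2 + k - k = j + k + 2 by omega,
    show j + k + 2 + k - 1 - k = j + k + 1 by omega, show j + k + 2 + k - 2 - k = j + k by omega]
  exact column_rec ha hA0 hA k j

theorem subdiag_succ (m : ℕ) :
    A (m + 2) (m + 1) = u * β * A m m + (u * α + v) * A (m + 1) m := by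
  have hcol := column_rec ha hA0 hA m 0
  simp only [zero_add] at hcol
  linear_combination apply_succ_succ hA (Nat.le_succ m) + u * hcol

theorem diag_rec (m : ℕ) :
    A (m + 2) (m + 2) =
      (u * α + 2 * v) * A (m + 1) (m + 1) + (u^2 * β - u * v * α - v^2) * A m m := by
  linear_combination apply_succ_succ hA (le_refl (m + 1)) + u * subdiag_succ ha hA0 hA m
    - (u * α + v) * apply_succ_succ hA (le_refl m)

theorem subdiag_rec (m : ℕ) :
    A (m + 3) (m + 2) =
      (u * α + 2 * v) * A (m + 2) (m + 1) + (u^2 * β - u * v * α - v^2) * A (m + 1) m := by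
  linear_combination subdiag_succ ha hA0 hA (m + 1) + u * β * apply_succ_succ hA (le_refl m)
    - v * subdiag_succ ha hA0 hA m

variable {d D : ℕ → ℝ} (hd : ∀ n, d n = ∑ k ∈ Finset.range (n/2 + 1), A (n-k) k)
  (hD : ∀ n, 2 ≤ n → D n = -d n + α * d (n-1) + β * d (n-2))
include hd hD

theorem D_two_mul {m : ℕ} (hm : 1 ≤ m) : D (2 * m) = -A m m := by
  have hcol := sum_range_column_rec ha hA0 hA (le_refl (2 * m))
  rw [hD _ (by omega), hd, hd, hd, show 2 * m / 2 + 1 = m + 1 by omega,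
    show (2 * m - 1) / 2 + 1 = m by omega, show (2 * m - 2) / 2 + 1 = m by omega,
    Finset.sum_range_succ, show 2 * m - m = m by omega, hcol]
  ring

theorem D_two_mul_add_one {m : ℕ} (hm : 1 ≤ m) :
    D (2 * m + 1) = -A (m + 1) m + α * A m m := by
  have hcol := sum_range_column_rec ha hA0 hA (Nat.le_succ (2 * m))
  rw [hD _ (by omega), hd, hd, hd, show (2 * m + 1) / 2 + 1 = m + 1 by omega,
    show (2 * m + 1 - 1) / 2 + 1 = m + 1 by omega, show (2 * m + 1 - 2) / 2 + 1 = m by omega,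
    Finset.sum_range_succ, Finset.sum_range_succ, show 2 * m + 1 - m = m + 1 by omega,
    show 2 * m + 1 - 1 - m = m by omega, hcol]
  ring

theorem D_even_rec (m : ℕ) :
    D (2 * m + 6) =
      (u * α + 2 * v) * D (2 * m + 4) + (u^2 * β - u * v * α - v^2) * D (2 * m + 2) := by
  rw [show 2 * m + 6 = 2 * (m + 3) by ring, show 2 * m + 4 = 2 * (m + 2) by ring,
    show 2 * m + 2 = 2 * (m + 1) by ring, D_two_mul ha hA0 hA hd hD (by omega),
    D_two_mul ha hA0 hA hd hD (by omega), D_two_mul ha hA0 hA hd hD (by omega)]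
  linear_combination -diag_rec ha hA0 hA (m + 1)

theorem D_odd_rec (m : ℕ) :
    D (2 * m + 7) =
      (u * α + 2 * v) * D (2 * m + 5) + (u^2 * β - u * v * α - v^2) * D (2 * m + 3) := by
  rw [show 2 * m + 7 = 2 * (m + 3) + 1 by ring, show 2 * m + 5 = 2 * (m + 2) + 1 by ring,
    show 2 * m + 3 = 2 * (m + 1) + 1 by ring, D_two_mul_add_one ha hA0 hA hd hD (by omega),
    D_two_mul_add_one ha hA0 hA hd hD (by omega), D_two_mul_add_one ha hA0 hA hd hD (by omega)]
  linear_combination α * diag_rec ha hA0 hA (m + 1) - subdiag_rec ha hA0 hA (m + 1)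

end BinomialInterpolated

theorem stmt_12_general (u v α β : ℝ)
    (a : ℕ → ℝ) (ha : ∀ n, 2 ≤ n → a n = α * a (n-1) + β * a (n-2))
    (A : ℕ → ℕ → ℝ) (hA0 : ∀ n, A n 0 = a n)
    (hA : ∀ n k, 1 ≤ k → k ≤ n → A n k = u * A n (k-1) + v * A (n-1) (k-1))
    (d : ℕ → ℝ) (hd : ∀ n, d n = ∑ k ∈ Finset.range (n/2 + 1), A (n-k) k)
    (D : ℕ → ℝ) (hD : ∀ n, 2 ≤ n → D n = -d n + α * d (n-1) + β * d (n-2)) :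
    (∀ n, 6 ≤ n →
      D n = (u*α + 2*v) * D (n-2) + (u^2*β - u*v*α - v^2) * D (n-4)) ∧
    (∀ k, 1 ≤ k → D (2*k) = -A k k) := by
  refine ⟨fun n hn => ?_, fun k hk => BinomialInterpolated.D_two_mul ha hA0 hA hd hD hk⟩
  obtain ⟨m, rfl | rfl⟩ : ∃ m, n = 2 * m + 6 ∨ n = 2 * m + 7 := ⟨(n - 6) / 2, by omega⟩
  · rw [show 2 * m + 6 - 2 = 2 * m + 4 by omega, show 2 * m + 6 - 4 = 2 * m + 2 by omega]
    exact BinomialInterpolated.D_even_rec ha hA0 hA hd hD m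
  · rw [show 2 * m + 7 - 2 = 2 * m + 5 by omega, show 2 * m + 7 - 4 = 2 * m + 3 by omega]
    exact BinomialInterpolated.D_odd_rec ha hA0 hA hd hD m

theorem stmt_12 (u v α β : ℝ) (hu : u ≠ 0) (hv : v ≠ 0) (hα : α ≠ 0) (hβ : β ≠ 0)
    (a : ℕ → ℝ) (ha : ∀ n, 2 ≤ n → a n = α * a (n-1) + β * a (n-2))
    (A : ℕ → ℕ → ℝ) (hA0 : ∀ n, A n 0 = a n)
    (hA : ∀ n k, 1 ≤ k → k ≤ n → A n k = u * A n (k-1) + v * A (n-1) (k-1))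
    (d : ℕ → ℝ) (hd : ∀ n, d n = ∑ k ∈ Finset.range (n/2 + 1), A (n-k) k)
    (D : ℕ → ℝ) (hD : ∀ n, 2 ≤ n → D n = -d n + α * d (n-1) + β * d (n-2)) :
    (∀ n, 6 ≤ n →
      D n = (u*α + 2*v) * D (n-2) + (u^2*β - u*v*α - v^2) * D (n-4)) ∧
    (∀ k, 1 ≤ k → D (2*k) = -A k k) :=
  stmt_12_general u v α β a ha A hA0 hA d hd D hD
end

section
/- Define the rising diagonal sums d(n) = Σ_{k=0}^{⌊n/2⌋} A(n−k,k) of the binary binomial interpolated triangle. Then for all n ≥ 6: d(n) = α·d(n-1) + (β+𝓐)·d(n-2) − α𝓐·d(n-3) + (𝓑 − β𝓐)·d(n-4) − α𝓑·d(n-5) − β𝓑·d(n-6), where 𝓐 = uα+2v and 𝓑 = u²β−uvα−v². -/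
/-!
Every column of the triangle satisfies the recurrence of `a`, so applying `1 - α S - β S²`
(`S` the shift) to the rising diagonal sums telescopes each sum down to its last one or two terms,
which lie on the diagonal `A m m` and the subdiagonal `A (m + 1) m`. Along the diagonal the
interpolation rule is a first-order linear system in `(A (m + 1) m, A m m)` with trace `𝓐` and
determinant `-𝓑`, so by Cayley–Hamilton these boundary terms satisfy
`x (m + 2) = 𝓐 x (m + 1) + 𝓑 x m`. Hence `d` is annihilated by `(x² - αx - β)(x⁴ - 𝓐x² - 𝓑)`.
-/

open Finset

namespace BinomialInterpolatedTriangle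

variable {R : Type*} [CommRing R] {u v α β : R} {A : ℕ → ℕ → R}

theorem recurrence_of_linearSystem {p q r s : R} {X Y : ℕ → R}
    (hX : ∀ m, X (m + 1) = p * X m + q * Y m) (hY : ∀ m, Y (m + 1) = r * X m + s * Y m)
    (c e : R) (m : ℕ) :
    c * X (m + 2) + e * Y (m + 2) =
      (p + s) * (c * X (m + 1) + e * Y (m + 1)) - (p * s - q * r) * (c * X m + e * Y m) := by
  rw [hX (m + 1), hY (m + 1), hX m, hY m]
  ring

theorem column_recurrence
    (hA : ∀ n k, k ≤ n → A (n + 1) (k + 1) = u * A (n + 1) k + v * A n k)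
    (h0 : ∀ n, A (n + 2) 0 = α * A (n + 1) 0 + β * A n 0) :
    ∀ k n, k ≤ n → A (n + 2) k = α * A (n + 1) k + β * A n k := by
  intro k
  induction k with
  | zero => exact fun n _ => h0 n
  | succ k ih =>
    intro n hkn
    obtain ⟨m, rfl⟩ : ∃ m, n = m + 1 := ⟨n - 1, by omega⟩
    linear_combination hA (m + 2) k (by omega) - α * hA (m + 1) k (by omega)
      - β * hA m k (by omega) + u * ih (m + 1) (by omega) + v * ih m (by omega)

def diagSum (A : ℕ → ℕ → R) (n : ℕ) : R :=
  ∑ k ∈ range (n / 2 + 1), A (n - k) k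

def secondOrderResidual (α β : R) (f : ℕ → R) (n : ℕ) : R :=
  f (n + 2) - α * f (n + 1) - β * f n

theorem sum_range_column_recurrence
    (hcol : ∀ k n, k ≤ n → A (n + 2) k = α * A (n + 1) k + β * A n k)
    {N j : ℕ} (hNj : 2 * N ≤ j) :
    ∑ k ∈ range (N + 1), A (j + 2 - k) k =
      α * ∑ k ∈ range (N + 1), A (j + 1 - k) k
        + β * ∑ k ∈ range (N + 1), A (j - k) k := by
  rw [mul_sum, mul_sum, ← sum_add_distrib]
  refine sum_congr rfl fun k hk => ?_
  have hkN := mem_range.mp hk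
  rw [show j + 2 - k = j - k + 2 by omega, show j + 1 - k = j - k + 1 by omega]
  exact hcol k (j - k) (by omega)

theorem secondOrderResidual_diagSum_even
    (hcol : ∀ k n, k ≤ n → A (n + 2) k = α * A (n + 1) k + β * A n k) (m : ℕ) :
    secondOrderResidual α β (diagSum A) (2 * m) = A (m + 1) (m + 1) := by
  have hsum := sum_range_column_recurrence hcol (le_refl (2 * m))
  simp only [secondOrderResidual, diagSum]
  rw [show (2 * m + 2) / 2 + 1 = m + 1 + 1 by omega, show (2 * m + 1) / 2 + 1 = m + 1 by omega,
    show 2 * m / 2 + 1 = m + 1 by omega, sum_range_succ, show 2 * m + 2 - (m + 1) = m + 1 by omega]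
  linear_combination hsum

theorem secondOrderResidual_diagSum_odd
    (hcol : ∀ k n, k ≤ n → A (n + 2) k = α * A (n + 1) k + β * A n k) (m : ℕ) :
    secondOrderResidual α β (diagSum A) (2 * m + 1) =
      A (m + 2) (m + 1) - α * A (m + 1) (m + 1) := by
  have hsum := sum_range_column_recurrence hcol (Nat.le_succ (2 * m))
  simp only [secondOrderResidual, diagSum]
  rw [show (2 * m + 1 + 2) / 2 + 1 = m + 1 + 1 by omega,
    show (2 * m + 1 + 1) / 2 + 1 = m + 1 + 1 by omega, show (2 * m + 1) / 2 + 1 = m + 1 by omega,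
    sum_range_succ, sum_range_succ (fun k => A (2 * m + 1 + 1 - k) k),
    show 2 * m + 1 + 2 - (m + 1) = m + 2 by omega, show 2 * m + 1 + 1 - (m + 1) = m + 1 by omega]
  linear_combination hsum

theorem secondOrderResidual_diagSum_recurrence
    (hA : ∀ n k, k ≤ n → A (n + 1) (k + 1) = u * A (n + 1) k + v * A n k)
    (h0 : ∀ n, A (n + 2) 0 = α * A (n + 1) 0 + β * A n 0) (n : ℕ) :
    secondOrderResidual α β (diagSum A) (n + 4) =
      (u * α + 2 * v) * secondOrderResidual α β (diagSum A) (n + 2)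
        + (u ^ 2 * β - u * v * α - v ^ 2) * secondOrderResidual α β (diagSum A) n := by
  have hcol := column_recurrence hA h0
  have hsub : ∀ m, A (m + 2) (m + 1) = (u * α + v) * A (m + 1) m + u * β * A m m := fun m => by
    linear_combination hA (m + 1) m (by omega) + u * hcol m m le_rfl
  have hdiag : ∀ m, A (m + 1) (m + 1) = u * A (m + 1) m + v * A m m := fun m =>
    hA m m le_rfl
  have hsys := recurrence_of_linearSystem (X := fun m => A (m + 1) m) (Y := fun m => A m m)
    hsub hdiag
  obtain ⟨m, rfl | rfl⟩ := Nat.even_or_odd' n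
  · rw [show 2 * m + 4 = 2 * (m + 2) by ring, show 2 * m + 2 = 2 * (m + 1) by ring,
      secondOrderResidual_diagSum_even hcol, secondOrderResidual_diagSum_even hcol,
      secondOrderResidual_diagSum_even hcol]
    linear_combination hsys 0 1 (m + 1)
  · rw [show 2 * m + 1 + 4 = 2 * (m + 2) + 1 by ring,
      show 2 * m + 1 + 2 = 2 * (m + 1) + 1 by ring, secondOrderResidual_diagSum_odd hcol,
      secondOrderResidual_diagSum_odd hcol, secondOrderResidual_diagSum_odd hcol]
    linear_combination hsys 1 (-α) (m + 1)

end BinomialInterpolatedTriangle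

open BinomialInterpolatedTriangle in
theorem stmt_13_general (u v α β : ℝ)
    (a : ℕ → ℝ) (ha : ∀ n, 2 ≤ n → a n = α * a (n-1) + β * a (n-2))
    (A : ℕ → ℕ → ℝ) (hA0 : ∀ n, A n 0 = a n)
    (hA : ∀ n k, 1 ≤ k → k ≤ n → A n k = u * A n (k-1) + v * A (n-1) (k-1))
    (d : ℕ → ℝ) (hd : ∀ n, d n = ∑ k ∈ Finset.range (n/2 + 1), A (n-k) k) :
    ∀ n, 6 ≤ n →
      d n = α * d (n-1) + (β + (u*α + 2*v)) * d (n-2)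
        - α*(u*α + 2*v) * d (n-3)
        + ((u^2*β - u*v*α - v^2) - β*(u*α + 2*v)) * d (n-4)
        - α*(u^2*β - u*v*α - v^2) * d (n-5)
        - β*(u^2*β - u*v*α - v^2) * d (n-6) := by
  have hA' : ∀ n k, k ≤ n → A (n + 1) (k + 1) = u * A (n + 1) k + v * A n k :=
    fun n k hk => by simpa using hA (n + 1) (k + 1) (by omega) (by omega)
  have h0 : ∀ n, A (n + 2) 0 = α * A (n + 1) 0 + β * A n 0 := fun n => by
    simpa [hA0] using ha (n + 2) (by omega)
  obtain rfl : d = diagSum A := funext hd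
  intro n hn
  obtain ⟨n, rfl⟩ : ∃ m, n = m + 6 := ⟨n - 6, by omega⟩
  have hrec := secondOrderResidual_diagSum_recurrence hA' h0 n
  simp only [secondOrderResidual] at hrec
  simp only [show n + 6 - 1 = n + 5 by omega, show n + 6 - 2 = n + 4 by omega,
    show n + 6 - 3 = n + 3 by omega, show n + 6 - 4 = n + 2 by omega,
    show n + 6 - 5 = n + 1 by omega, Nat.add_sub_cancel]
  linear_combination hrec

theorem stmt_13 (u v α β : ℝ) (hu : u ≠ 0) (hv : v ≠ 0) (hα : α ≠ 0) (hβ : β ≠ 0)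
    (a : ℕ → ℝ) (ha : ∀ n, 2 ≤ n → a n = α * a (n-1) + β * a (n-2))
    (A : ℕ → ℕ → ℝ) (hA0 : ∀ n, A n 0 = a n)
    (hA : ∀ n k, 1 ≤ k → k ≤ n → A n k = u * A n (k-1) + v * A (n-1) (k-1))
    (d : ℕ → ℝ) (hd : ∀ n, d n = ∑ k ∈ Finset.range (n/2 + 1), A (n-k) k) :
    ∀ n, 6 ≤ n →
      d n = α * d (n-1) + (β + (u*α + 2*v)) * d (n-2)
        - α*(u*α + 2*v) * d (n-3)
        + ((u^2*β - u*v*α - v^2) - β*(u*α + 2*v)) * d (n-4)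
        - α*(u^2*β - u*v*α - v^2) * d (n-5)
        - β*(u^2*β - u*v*α - v^2) * d (n-6) :=
  stmt_13_general u v α β a ha A hA0 hA d hd
end

section
/- Fix an integer ℓ and let k₀ = max(0, −ℓ). Define c(k) = A(2k+ℓ, k) for k ≥ k₀, a column of the binary binomial interpolated triangle. Then for all k ≥ k₀: c(k+2) = (α²u + αv + 2βu)·c(k+1) − β·(u²β − uvα − v²)·c(k). -/
theorem stmt_14 (u v α β : ℝ) (hu : u ≠ 0) (hv : v ≠ 0) (hα : α ≠ 0) (hβ : β ≠ 0)
    (a : ℕ → ℝ) (ha : ∀ n, 2 ≤ n → a n = α * a (n-1) + β * a (n-2))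
    (A : ℕ → ℕ → ℝ) (hA0 : ∀ n, A n 0 = a n)
    (hA : ∀ n k, 1 ≤ k → k ≤ n → A n k = u * A n (k-1) + v * A (n-1) (k-1))
    (ℓ : ℤ) (c : ℕ → ℝ) (hc : ∀ k, c k = A (2*(k:ℤ) + ℓ).toNat k) :
    ∀ k, (max 0 (-ℓ)).toNat ≤ k →
      c (k+2) = (α^2*u + α*v + 2*β*u) * c (k+1)
        - β * (u^2*β - u*v*α - v^2) * c k := by
  -- A satisfies the same recurrence as a in its first argument, on k ≤ m
  have L : ∀ k m : ℕ, k ≤ m → A (m+2) k = α * A (m+1) k + β * A m k := by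
    intro k
    induction k with
    | zero =>
      intro m _
      rw [hA0, hA0, hA0]
      have := ha (m+2) (by omega)
      simpa using this
    | succ k ih =>
      intro m hm
      obtain ⟨m', rfl⟩ : ∃ m', m = m'+1 := ⟨m-1, by omega⟩
      have h1 := hA (m'+3) (k+1) (by omega) (by omega)
      have h2 := hA (m'+2) (k+1) (by omega) (by omega)
      have h3 := hA (m'+1) (k+1) (by omega) (by omega)
      have i1 := ih (m'+1) (by omega)
      have i2 := ih m' (by omega)
      simp only [Nat.add_sub_cancel, show m'+1+2 = m'+3 from rfl,
        show m'+3-1 = m'+2 from rfl, show m'+2-1 = m'+1 from rfl,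
        show m'+1-1 = m' from rfl] at h1 h2 h3 ⊢
      rw [h1, h2, h3, i1, i2]; ring
  intro k hk
  have hk' : -ℓ ≤ (k : ℤ) := by
    have := Int.toNat_le.mp hk
    omega
  set n : ℕ := (2*(k:ℤ) + ℓ).toNat with hn
  have hnk : (n : ℤ) = 2*(k:ℤ) + ℓ := Int.toNat_of_nonneg (by omega)
  have hkn : k ≤ n := by omega
  have e1 : c k = A n k := hc k
  have e2 : c (k+1) = A (n+2) (k+1) := by
    rw [hc]
    congr 2
    push_cast
    omega
  have e3 : c (k+2) = A (n+4) (k+2) := by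
    rw [hc]
    congr 2
    push_cast
    omega
  have h1 := hA (n+4) (k+2) (by omega) (by omega)
  have h2 := hA (n+2) (k+1) (by omega) (by omega)
  have h3 := hA (n+1) (k+1) (by omega) (by omega)
  simp only [Nat.add_sub_cancel, show n+4-1 = n+3 from rfl, show n+2-1 = n+1 from rfl,
    show n+1-1 = n from rfl, show k+2-1 = k+1 from rfl, show k+1-1 = k from rfl] at h1 h2 h3
  have r1 := L (k+1) (n+2) (by omega)
  have r2 := L (k+1) (n+1) (by omega)
  have r3 := L k n hkn
  rw [e1, e2, e3, h1, r1, r2, h3, h2, r3]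
  ring
end

section
/- Suppose α² + 4β ≠ 0, and let x₁ = (α+D)/2, x₂ = (α−D)/2 with D = √(α²+4β). Take the triangle BT(a₀,a₁,α,β;α,β), i.e., u = α and v = β. Then for all n ≥ 1 and 0 ≤ k ≤ n: A(n,k) = a₀·β·(x₁^{n+k-1} − x₂^{n+k-1})/(x₁−x₂) + a₁·(x₁^{n+k} − x₂^{n+k})/(x₁−x₂). -/
theorem stmt_15 (α β : ℝ) (hα : α ≠ 0) (hβ : β ≠ 0) (hD : 0 < α^2 + 4*β)
    (a₀ a₁ : ℝ) (a : ℕ → ℝ) (ha0 : a 0 = a₀) (ha1 : a 1 = a₁)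
    (ha : ∀ n, 2 ≤ n → a n = α * a (n-1) + β * a (n-2))
    (A : ℕ → ℕ → ℝ) (hA0 : ∀ n, A n 0 = a n)
    (hA : ∀ n k, 1 ≤ k → k ≤ n → A n k = α * A n (k-1) + β * A (n-1) (k-1)) :
    ∀ n k, 1 ≤ n → k ≤ n →
      A n k = a₀ * β * ((((α + Real.sqrt (α^2+4*β))/2)^(n+k-1)
            - ((α - Real.sqrt (α^2+4*β))/2)^(n+k-1)) / Real.sqrt (α^2+4*β))
        + a₁ * ((((α + Real.sqrt (α^2+4*β))/2)^(n+k)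
            - ((α - Real.sqrt (α^2+4*β))/2)^(n+k)) / Real.sqrt (α^2+4*β)) := by
  set D := Real.sqrt (α^2+4*β) with hDdef
  have hD2 : D^2 = α^2 + 4*β := Real.sq_sqrt hD.le
  have hDne : D ≠ 0 := by
    intro h; rw [h] at hD2; nlinarith
  set x₁ : ℝ := (α + D)/2 with hx₁def
  set x₂ : ℝ := (α - D)/2 with hx₂def
  have hsub : x₁ - x₂ = D := by rw [hx₁def, hx₂def]; ring
  have h1 : x₁^2 = α*x₁ + β := by rw [hx₁def]; linear_combination hD2/4
  have h2 : x₂^2 = α*x₂ + β := by rw [hx₂def]; linear_combination hD2/4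
  set F : ℕ → ℝ := fun m => (x₁^m - x₂^m)/D with hF
  have hF0 : F 0 = 0 := by simp [hF]
  have hF1 : F 1 = 1 := by simp only [hF, pow_one, hsub]; field_simp
  have hF2 : F 2 = α := by
    simp only [hF]
    rw [div_eq_iff hDne]
    linear_combination h1 - h2 + α * hsub
  have hFrec : ∀ m, F (m+2) = α * F (m+1) + β * F m := by
    intro m
    simp only [hF]
    rw [div_eq_iff hDne]
    have e1 : x₁^(m+2) = α*x₁^(m+1) + β*x₁^m := by linear_combination x₁^m * h1
    have e2 : x₂^(m+2) = α*x₂^(m+1) + β*x₂^m := by linear_combination x₂^m * h2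
    field_simp
    linear_combination e1 - e2
  set G : ℕ → ℝ := fun m => a₀*β*F m + a₁*F (m+1) with hG
  have hG0 : G 0 = a₁ := by simp [hG, hF0, hF1]
  have hG1 : G 1 = α * a₁ + β * a₀ := by simp [hG, hF1, hF2]; ring
  have hGrec : ∀ m, G (m+2) = α * G (m+1) + β * G m := by
    intro m
    have r2 : F (m+2+1) = α * F (m+2) + β * F (m+1) := hFrec (m+1)
    simp only [hG]
    rw [r2, hFrec m]
    ring
  have haG : ∀ m, a (m+1) = G m ∧ a (m+2) = G (m+1) := by
    intro m
    induction m with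
    | zero =>
      constructor
      · rw [ha1, hG0]
      · have := ha 2 (by norm_num)
        norm_num at this
        rw [this, ha0, ha1, hG1]
    | succ m ih =>
      refine ⟨ih.2, ?_⟩
      have := ha (m+3) (by omega)
      have e1 : m+3-1 = m+2 := by omega
      have e2 : m+3-2 = m+1 := by omega
      rw [e1, e2] at this
      rw [show m+1+2 = m+3 from rfl, this, ih.1, ih.2, show m+1+1 = m+2 from rfl]
      exact (hGrec m).symm
  have key : ∀ k n, 1 ≤ n → k ≤ n → A n k = G (n + k - 1) := by
    intro k
    induction k with
    | zero =>
      intro n hn _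
      rw [hA0]
      have := (haG (n-1)).1
      rwa [show n-1+1 = n by omega] at this
    | succ k ih =>
      intro n hn hk
      rw [hA n (k+1) (by omega) hk]
      simp only [Nat.add_sub_cancel]
      rcases Nat.lt_or_ge n 2 with h | h
      · -- n = 1, k = 0
        have hn1 : n = 1 := by omega
        have hk0 : k = 0 := by omega
        subst hn1; subst hk0
        rw [ih 1 le_rfl (by omega), hA0, ha0]
        norm_num [hG0, hG1]
      · have i1 := ih n hn (by omega)
        have i2 := ih (n-1) (by omega) (by omega)
        rw [i1, i2]
        have e1 : n + (k+1) - 1 = (n + k - 2) + 2 := by omega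
        have e2 : n + k - 1 = (n + k - 2) + 1 := by omega
        have e3 : n - 1 + k - 1 = n + k - 2 := by omega
        rw [e1, e2, e3]
        exact (hGrec (n+k-2)).symm
  intro n k hn hk
  rw [key k n hn hk]
  simp only [hG, hF]
  rw [show n + k - 1 + 1 = n + k by omega]
end

section
/- Suppose a₀ ≠ 0, u = −1, v = α = 2a₁/a₀ (with α ≠ 0), β nonzero, a(0)=a₀, a(1)=a₁, a(n)=α·a(n-1)+β·a(n-2), and build the triangle A(n,0)=a(n), A(n,k)=−A(n,k-1)+α·A(n-1,k-1). Then the triangle is vertically symmetric: A(n,k) = A(n,n−k) for all 0 ≤ k ≤ n. -/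
theorem stmt_18 (a₀ a₁ α β : ℝ) (ha₀ : a₀ ≠ 0) (hαdef : α = 2*a₁/a₀)
    (hα : α ≠ 0) (hβ : β ≠ 0)
    (a : ℕ → ℝ) (ha0 : a 0 = a₀) (ha1 : a 1 = a₁)
    (ha : ∀ n, 2 ≤ n → a n = α * a (n-1) + β * a (n-2))
    (A : ℕ → ℕ → ℝ) (hA0 : ∀ n, A n 0 = a n)
    (hA : ∀ n k, 1 ≤ k → k ≤ n → A n k = (-1) * A n (k-1) + α * A (n-1) (k-1)) :
    ∀ n k, k ≤ n → A n k = A n (n-k) := by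
  obtain ⟨t, ht⟩ : ∃ t : ℂ, t ^ 2 = (α : ℂ) ^ 2 + 4 * β :=
    IsAlgClosed.exists_pow_nat_eq _ (by norm_num)
  obtain ⟨r, s, hsum, hr2, hs2⟩ :
      ∃ r s : ℂ, r + s = (α : ℂ) ∧ r ^ 2 = (α : ℂ) * r + β ∧ s ^ 2 = (α : ℂ) * s + β :=
    ⟨((α : ℂ) + t) / 2, ((α : ℂ) - t) / 2, by ring,
      by linear_combination ht / 4, by linear_combination ht / 4⟩
  obtain ⟨c, hcdef⟩ : ∃ c : ℂ, 2 * c = (a₀ : ℂ) := ⟨(a₀ : ℂ) / 2, by ring⟩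
  have ha1' : (α : ℂ) * a₀ = 2 * a₁ := by
    field_simp [ha₀] at hαdef
    exact_mod_cast hαdef
  have key1 : ∀ m : ℕ, ((a m : ℝ) : ℂ) = c * (r ^ m + s ^ m) := by
    intro m
    induction m using Nat.strong_induction_on with
    | _ m ih =>
      match m with
      | 0 => rw [ha0]; simp; linear_combination -hcdef
      | 1 =>
        rw [ha1]
        have h : c * (r ^ 1 + s ^ 1) = c * α := by rw [pow_one, pow_one, hsum]
        rw [h]
        linear_combination (-ha1' / 2) - ((α : ℂ) / 2) * hcdef
      | (j + 2) =>
        rw [ha (j + 2) (by omega)]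
        have e1 : j + 2 - 1 = j + 1 := by omega
        have e2 : j + 2 - 2 = j := by omega
        rw [e1, e2]
        push_cast
        rw [ih (j + 1) (by omega), ih j (by omega)]
        linear_combination (-(c * r ^ j)) * hr2 + (-(c * s ^ j)) * hs2
  have key2 : ∀ k n : ℕ, k ≤ n →
      ((A n k : ℝ) : ℂ) = c * (r ^ (n - k) * s ^ k + s ^ (n - k) * r ^ k) := by
    intro k
    induction k with
    | zero => intro n _; rw [hA0, key1 n]; simp
    | succ k ih =>
      intro n hn
      rw [hA n (k + 1) (by omega) hn]
      have e0 : k + 1 - 1 = k := by omega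
      rw [e0]
      push_cast
      rw [ih n (by omega), ih (n - 1) (by omega)]
      have e1 : n - k = (n - (k + 1)) + 1 := by omega
      have e2 : n - 1 - k = n - (k + 1) := by omega
      rw [e1, e2]
      linear_combination (-(c * s ^ k * r ^ (n - (k + 1)) + c * r ^ k * s ^ (n - (k + 1)))) * hsum
  intro n k hk
  have h1 := key2 k n hk
  have h2 := key2 (n - k) n (by omega)
  have e3 : n - (n - k) = k := by omega
  rw [e3] at h2
  have h : ((A n k : ℝ) : ℂ) = ((A n (n - k) : ℝ) : ℂ) := by rw [h1, h2]; ring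
  exact_mod_cast h
end

section
/- There do not exist nonzero reals u, v, α, β such that the binary binomial interpolated triangle BT(1,1,α,β;u,v) equals Pascal's triangle, i.e., such that A(n,k) = C(n,k) for all 0 ≤ k ≤ n. -/
theorem stmt_19 :
    ¬ ∃ (u v α β : ℝ) (a : ℕ → ℝ) (A : ℕ → ℕ → ℝ),
      u ≠ 0 ∧ v ≠ 0 ∧ α ≠ 0 ∧ β ≠ 0 ∧
      a 0 = 1 ∧ a 1 = 1 ∧
      (∀ n, 2 ≤ n → a n = α * a (n-1) + β * a (n-2)) ∧
      (∀ n, A n 0 = a n) ∧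
      (∀ n k, 1 ≤ k → k ≤ n → A n k = u * A n (k-1) + v * A (n-1) (k-1)) ∧
      (∀ n k, k ≤ n → A n k = (n.choose k : ℝ)) := by
  rintro ⟨u, v, α, β, a, A, hu, hv, hα, hβ, ha0, ha1, harec, hA0, hArec, hAC⟩
  have h1 := hArec 1 1 le_rfl le_rfl
  have h2 := hArec 2 1 le_rfl (by norm_num)
  norm_num [hAC 1 1, hAC 2 1, hAC 1 0, hAC 0 0, hAC 2 0] at h1 h2
  linarith
end
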